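/- arXiv:2209.14990 — 2 statements merged into one kernel-verified Lean document; each statement's English description precedes it below -/
import Mathlib

section
/- For entrywise nonnegative vectors p, q in R^n, ( sum_i |p_i - q_i| )^2 <= 2 ( sum_i (p_i + q_i) ) * ( sum_i ( sqrt(p_i) - sqrt(q_i) )^2 ). -/
/-!
Factor `a - b = (√a + √b)(√a - √b)` and bound `(√a + √b)² ≤ 2(a + b)`; Cauchy–Schwarz over the
index set then pairs `∑ 2(pᵢ + qᵢ)` with `∑ (√pᵢ - √qᵢ)²`.
-/

open Finset

theorem Real.sq_sub_le_two_mul_add_mul_sq_sqrt_sub {a b : ℝ} (ha : 0 ≤ a) (hb : 0 ≤ b) :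
    (a - b) ^ 2 ≤ 2 * (a + b) * (√a - √b) ^ 2 := by
  have hfactor : a - b = (√a + √b) * (√a - √b) := by
    rw [← sq_sub_sq, Real.sq_sqrt ha, Real.sq_sqrt hb]
  calc (a - b) ^ 2 = (√a + √b) ^ 2 * (√a - √b) ^ 2 := by rw [hfactor, mul_pow]
    _ ≤ 2 * (√a ^ 2 + √b ^ 2) * (√a - √b) ^ 2 := by gcongr; exact add_sq_le
    _ = 2 * (a + b) * (√a - √b) ^ 2 := by rw [Real.sq_sqrt ha, Real.sq_sqrt hb]

theorem Finset.sq_sum_abs_sub_le_two_mul_sum_add_mul_sum_sq_sqrt_sub {ι : Type*} (s : Finset ι)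
    {f g : ι → ℝ} (hf : ∀ i ∈ s, 0 ≤ f i) (hg : ∀ i ∈ s, 0 ≤ g i) :
    (∑ i ∈ s, |f i - g i|) ^ 2 ≤
      2 * (∑ i ∈ s, (f i + g i)) * ∑ i ∈ s, (√(f i) - √(g i)) ^ 2 := by
  rw [mul_sum s (fun i ↦ f i + g i) 2]
  refine sum_sq_le_sum_mul_sum_of_sq_le_mul s (fun i hi ↦ ?_) (fun i _ ↦ sq_nonneg _)
    fun i hi ↦ (sq_abs _).trans_le ?_
  · linarith [hf i hi, hg i hi]
  · exact Real.sq_sub_le_two_mul_add_mul_sq_sqrt_sub (hf i hi) (hg i hi)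

/-- for entrywise nonnegative vectors `p, q ∈ ℝⁿ`,
`(∑ |pᵢ - qᵢ|)² ≤ 2 (∑ (pᵢ + qᵢ)) (∑ (√pᵢ - √qᵢ)²)`. -/
theorem sq_sum_abs_sub_le_two_mul_sum_add_mul_sum_sq_sqrt_sub
    (n : ℕ) (p q : Fin n → ℝ) (hp : ∀ i, 0 ≤ p i) (hq : ∀ i, 0 ≤ q i) :
    (∑ i, |p i - q i|) ^ 2 ≤
      2 * (∑ i, (p i + q i)) * (∑ i, (Real.sqrt (p i) - Real.sqrt (q i)) ^ 2) :=
  Finset.sq_sum_abs_sub_le_two_mul_sum_add_mul_sum_sq_sqrt_sub univ (fun i _ ↦ hp i)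
    fun i _ ↦ hq i
end

section
/- Generalized l2-Eluder argument (single-index, constant-beta case): Suppose x_1, ..., x_K in R^d satisfy ||x_k||_2 <= R_x, and f_1, ..., f_K : R^d -> R are of the form f_k(x) = max_{r} sum_{j=1}^J |<x, y_{k,j,r}>| with max_{k,r} sum_j ||y_{k,j,r}||_2 <= R_y. If for every k in [K], sum_{t=1}^{k-1} f_k(x_t)^2 <= beta, then for any M > 0, sum_{t=1}^K min{M, f_t(x_t)} <= sqrt( 2 d (M^2 K + beta K) log( 1 + (K/d) R_x^2 R_y^2 / M^2 ) ). -/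
/-!
For each `k` take an `r` attaining the maximum in `f_k(x_k)` and the signs `ε_j` of
`⟨x_k, y_{k,j,r}⟩`. The vector `u_k = ∑_j ε_j y_{k,j,r}` has `‖u_k‖ ≤ R_y`, `⟨x_k, u_k⟩ = f_k(x_k)`
and `|⟨x, u_k⟩| ≤ f_k(x)` for all `x`, so it suffices to treat the linear functions `⟨·, u_k⟩`.

Put `λ = M² / R_y²` and `Λ_k = λ I + ∑_{t<k} x_t x_tᵀ`. Cauchy–Schwarz for the inner product
given by `Λ_k` yields `⟨x_k, u_k⟩² ≤ ‖x_k‖²_{Λ_k⁻¹} (λ ‖u_k‖² + ∑_{t<k} ⟨x_t, u_k⟩²)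
≤ ‖x_k‖²_{Λ_k⁻¹} (M² + β)`. By the matrix determinant lemma,
`∑_k log (1 + ‖x_k‖²_{Λ_k⁻¹}) = log (det Λ_{K+1} / det Λ_1)`, and concavity of `log` on the
eigenvalues of `Λ_{K+1}`, whose trace is at most `d λ + K R_x²`, bounds this by
`d log (1 + K R_x² / (d λ))`. Since `min 1 q ≤ 2 log (1 + q)`, this controls
`∑_k min(M, |⟨x_k, u_k⟩|)²`, and Cauchy–Schwarz over `k` gives the bound.
-/

open Finset Matrix

/-- The function `f_k(x) = max_{r ∈ R} ∑_{j=1}^J |⟨x, y_{k,j,r}⟩|`. -/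
noncomputable def maxAbsSumInner' {R : Type*} [Fintype R] [Nonempty R] {d J : ℕ}
    (y : Fin J → R → Fin d → ℝ) (v : Fin d → ℝ) : ℝ :=
  Finset.univ.sup' Finset.univ_nonempty (fun r => ∑ j, |v ⬝ᵥ y j r|)

namespace Matrix

variable {n : Type*} [Fintype n]

theorem PosSemidef.sq_dotProduct_mulVec_le {A : Matrix n n ℝ} (hA : A.PosSemidef) (a b : n → ℝ) :
    (a ⬝ᵥ (A *ᵥ b)) ^ 2 ≤ (a ⬝ᵥ (A *ᵥ a)) * (b ⬝ᵥ (A *ᵥ b)) := by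
  let _ := A.toSeminormedAddCommGroup hA
  let _ := A.toInnerProductSpace hA
  have h := real_inner_mul_inner_self_le a b
  rw [dotProduct_comm a, dotProduct_comm a, dotProduct_comm b, sq]
  exact h

variable [DecidableEq n]

theorem det_add_vecMulVec {α : Type*} [CommRing α] {A : Matrix n n α} (hA : IsUnit A.det)
    (u v : n → α) : (A + vecMulVec u v).det = A.det * (1 + v ⬝ᵥ (A⁻¹ *ᵥ u)) := by
  rw [vecMulVec_eq Unit, det_add_replicateCol_mul_replicateRow hA, det_unique (n := Unit),
    add_apply, one_apply_eq, Matrix.mul_assoc, ← replicateCol_mulVec,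
    replicateRow_mul_replicateCol_apply]

theorem PosDef.sq_dotProduct_le {A : Matrix n n ℝ} (hA : A.PosDef) (a b : n → ℝ) :
    (a ⬝ᵥ b) ^ 2 ≤ (a ⬝ᵥ (A⁻¹ *ᵥ a)) * (b ⬝ᵥ (A *ᵥ b)) := by
  have h := hA.inv.posSemidef.sq_dotProduct_mulVec_le a (A *ᵥ b)
  rwa [mulVec_mulVec, nonsing_inv_mul _ (isUnit_iff_ne_zero.2 hA.det_pos.ne'), one_mulVec,
    dotProduct_comm (A *ᵥ b)] at h

theorem PosDef.log_det_le {A : Matrix n n ℝ} (hA : A.PosDef) {B : ℝ} (hB : 0 < B)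
    (h : A.trace ≤ Fintype.card n * B) : Real.log A.det ≤ Fintype.card n * Real.log B := by
  set μ := hA.isHermitian.eigenvalues
  have hμ : ∀ i, 0 < μ i := hA.eigenvalues_pos
  have hdet : A.det = ∏ i, μ i := by simpa using hA.isHermitian.det_eq_prod_eigenvalues
  have htr : A.trace = ∑ i, μ i := by simpa using hA.isHermitian.trace_eq_sum_eigenvalues
  have hlog : ∀ i, Real.log (μ i) ≤ Real.log B + (μ i / B - 1) := fun i => by
    have := Real.log_le_sub_one_of_pos (div_pos (hμ i) hB)
    rwa [Real.log_div (hμ i).ne' hB.ne', sub_le_iff_le_add'] at this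
  have htrB : A.trace / B ≤ Fintype.card n := (div_le_iff₀ hB).2 h
  calc Real.log A.det = ∑ i, Real.log (μ i) := by
        rw [hdet, Real.log_prod fun i _ => (hμ i).ne']
    _ ≤ ∑ i, (Real.log B + (μ i / B - 1)) := sum_le_sum fun i _ => hlog i
    _ = Fintype.card n * Real.log B + (A.trace / B - Fintype.card n) := by
        rw [htr, sum_add_distrib, sum_sub_distrib, ← sum_div]; simp
    _ ≤ Fintype.card n * Real.log B := by linarith

end Matrix

theorem Real.min_one_le_two_mul_log_one_add {u : ℝ} (hu : 0 ≤ u) :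
    min 1 u ≤ 2 * Real.log (1 + u) := by
  have hlog : u / (1 + u) ≤ Real.log (1 + u) := by
    have := Real.one_sub_inv_le_log_of_pos (by linarith : 0 < 1 + u)
    rwa [← one_div, one_sub_div (by linarith), add_sub_cancel_left] at this
  have : min 1 u ≤ 2 * (u / (1 + u)) := by
    rw [mul_div_assoc', le_div_iff₀ (by linarith)]
    rcases le_total u 1 with h | h
    · rw [min_eq_right h]; nlinarith
    · rw [min_eq_left h]; linarith
  linarith

theorem sq_min_abs_le_mul_min_one {M c q a : ℝ} (hM : 0 ≤ M) (hc : M ^ 2 ≤ c)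
    (h : a ^ 2 ≤ c * q) : min M |a| ^ 2 ≤ c * min 1 q := by
  have h0 : 0 ≤ min M |a| := le_min hM (abs_nonneg a)
  rcases le_total q 1 with hq | hq
  · rw [min_eq_right hq, ← sq_abs a] at *
    exact (pow_le_pow_left₀ h0 (min_le_right _ _) 2).trans h
  · rw [min_eq_left hq, mul_one]
    exact (pow_le_pow_left₀ h0 (min_le_left _ _) 2).trans hc

section LinearEluder

variable {n : Type*} [Fintype n]

theorem sqrt_sum_sq_eq_norm_toLp (v : n → ℝ) : √(∑ i, v i ^ 2) = ‖WithLp.toLp 2 v‖ := by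
  simp [EuclideanSpace.norm_eq]

theorem dotProduct_self_le_sq_of_sqrt_le {v : n → ℝ} {a : ℝ} (h : √(∑ i, v i ^ 2) ≤ a) :
    v ⬝ᵥ v ≤ a ^ 2 := by
  simpa [dotProduct, sq] using (Real.sqrt_le_iff.1 h).2

variable [DecidableEq n]

noncomputable def regularizedGram (lam : ℝ) (x : ℕ → n → ℝ) (k : ℕ) : Matrix n n ℝ :=
  lam • 1 + ∑ t ∈ Ico 1 k, vecMulVec (x t) (x t)

noncomputable def ellipticalPotential (lam : ℝ) (x : ℕ → n → ℝ) (k : ℕ) : ℝ :=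
  x k ⬝ᵥ ((regularizedGram lam x k)⁻¹ *ᵥ x k)

section regularizedGram
variable {lam : ℝ} {x : ℕ → n → ℝ}

theorem regularizedGram_posDef (hlam : 0 < lam) (k : ℕ) : (regularizedGram lam x k).PosDef :=
  (PosDef.one.smul hlam).add_posSemidef <|
    posSemidef_sum _ fun t _ => posSemidef_vecMulVec_self_star (x t)

omit [Fintype n] in
theorem regularizedGram_succ {k : ℕ} (hk : 1 ≤ k) :
    regularizedGram lam x (k + 1) = regularizedGram lam x k + vecMulVec (x k) (x k) := by
  rw [regularizedGram, regularizedGram, sum_Ico_succ_top hk, add_assoc]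

theorem dotProduct_regularizedGram_mulVec (k : ℕ) (w : n → ℝ) :
    w ⬝ᵥ (regularizedGram lam x k *ᵥ w) = lam * (w ⬝ᵥ w) + ∑ t ∈ Ico 1 k, (x t ⬝ᵥ w) ^ 2 := by
  simp only [regularizedGram, add_mulVec, smul_mulVec, one_mulVec, dotProduct_add,
    dotProduct_smul, smul_eq_mul, sum_mulVec, dotProduct_sum, vecMulVec_mulVec, op_smul_eq_smul]
  congr 1
  exact sum_congr rfl fun t _ => by rw [dotProduct_comm w, sq]

theorem trace_regularizedGram (k : ℕ) :
    (regularizedGram lam x k).trace = Fintype.card n * lam + ∑ t ∈ Ico 1 k, x t ⬝ᵥ x t := by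
  simp [regularizedGram, trace_sum, trace_vecMulVec, mul_comm]

theorem det_regularizedGram_one : (regularizedGram lam x 1).det = lam ^ Fintype.card n := by
  simp [regularizedGram]

theorem det_regularizedGram_succ (hlam : 0 < lam) {k : ℕ} (hk : 1 ≤ k) :
    (regularizedGram lam x (k + 1)).det =
      (regularizedGram lam x k).det * (1 + ellipticalPotential lam x k) := by
  rw [regularizedGram_succ hk, det_add_vecMulVec, ellipticalPotential]
  exact isUnit_iff_ne_zero.2 (regularizedGram_posDef hlam k).det_pos.ne'

theorem ellipticalPotential_nonneg (hlam : 0 < lam) (k : ℕ) :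
    0 ≤ ellipticalPotential lam x k := by
  simpa [ellipticalPotential] using
    (regularizedGram_posDef hlam k).inv.posSemidef.dotProduct_mulVec_nonneg (x k)

theorem sum_log_one_add_ellipticalPotential (hlam : 0 < lam) (K : ℕ) :
    ∑ k ∈ Icc 1 K, Real.log (1 + ellipticalPotential lam x k) =
      Real.log (regularizedGram lam x (K + 1)).det - Real.log (regularizedGram lam x 1).det := by
  rw [← Ico_add_one_right_eq_Icc,
    ← sum_Ico_sub (fun k => Real.log (regularizedGram lam x k).det) (by omega : 1 ≤ K + 1)]
  refine sum_congr rfl fun k hk => ?_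
  have h := ellipticalPotential_nonneg (x := x) hlam k
  rw [det_regularizedGram_succ hlam (mem_Ico.1 hk).1,
    Real.log_mul (regularizedGram_posDef hlam k).det_pos.ne' (by linarith)]
  ring

theorem sq_dotProduct_le_ellipticalPotential_mul (hlam : 0 < lam) (k : ℕ) (u : n → ℝ) :
    (x k ⬝ᵥ u) ^ 2 ≤
      ellipticalPotential lam x k * (lam * (u ⬝ᵥ u) + ∑ t ∈ Ico 1 k, (x t ⬝ᵥ u) ^ 2) := by
  rw [ellipticalPotential, ← dotProduct_regularizedGram_mulVec]
  exact (regularizedGram_posDef hlam k).sq_dotProduct_le _ _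

theorem sum_min_one_ellipticalPotential_le [Nonempty n] (hlam : 0 < lam) {K : ℕ} {Rx : ℝ}
    (hx : ∀ k ∈ Icc 1 K, x k ⬝ᵥ x k ≤ Rx ^ 2) :
    ∑ k ∈ Icc 1 K, min 1 (ellipticalPotential lam x k) ≤
      2 * Fintype.card n * Real.log (1 + K * Rx ^ 2 / (Fintype.card n * lam)) := by
  set d : ℝ := (Fintype.card n : ℝ)
  have hd : 0 < d := by simp [d, Fintype.card_pos]
  have htrace : (regularizedGram lam x (K + 1)).trace ≤ d * (lam + K * Rx ^ 2 / d) := by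
    rw [trace_regularizedGram, Ico_add_one_right_eq_Icc, mul_add, mul_div_cancel₀ _ hd.ne']
    grw [sum_le_sum hx, sum_const, Nat.card_Icc, nsmul_eq_mul]
    simp [d]
  have hlogdet := (regularizedGram_posDef hlam (K + 1)).log_det_le (by positivity) htrace
  calc ∑ k ∈ Icc 1 K, min 1 (ellipticalPotential lam x k)
      ≤ ∑ k ∈ Icc 1 K, 2 * Real.log (1 + ellipticalPotential lam x k) :=
        sum_le_sum fun k _ =>
          Real.min_one_le_two_mul_log_one_add (ellipticalPotential_nonneg hlam k)
    _ = 2 * (Real.log (regularizedGram lam x (K + 1)).det - d * Real.log lam) := by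
        rw [← mul_sum, sum_log_one_add_ellipticalPotential hlam, det_regularizedGram_one,
          Real.log_pow]
    _ ≤ 2 * (d * Real.log (lam + K * Rx ^ 2 / d) - d * Real.log lam) := by gcongr
    _ = 2 * d * Real.log (1 + K * Rx ^ 2 / (d * lam)) := by
        rw [mul_assoc, ← mul_sub, ← Real.log_div (by positivity) hlam.ne']
        congr 3
        field_simp

end regularizedGram

theorem sum_min_abs_dotProduct_le [Nonempty n] {K : ℕ} {x u : ℕ → n → ℝ} {Rx Ry β M : ℝ}
    (hβ : 0 ≤ β) (hM : 0 < M)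
    (hx : ∀ k ∈ Icc 1 K, √(∑ i, x k i ^ 2) ≤ Rx)
    (hu : ∀ k ∈ Icc 1 K, √(∑ i, u k i ^ 2) ≤ Ry)
    (hpre : ∀ k ∈ Icc 1 K, ∑ t ∈ Ico 1 k, (x t ⬝ᵥ u k) ^ 2 ≤ β) :
    ∑ t ∈ Icc 1 K, min M |x t ⬝ᵥ u t| ≤
      √(2 * Fintype.card n * (M ^ 2 * K + β * K) *
        Real.log (1 + ((K : ℝ) / Fintype.card n) * Rx ^ 2 * Ry ^ 2 / M ^ 2)) := by
  rcases le_or_gt Ry 0 with hRy | hRy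
  · have hu0 : ∀ t ∈ Icc 1 K, u t = 0 := fun t ht => by
      have h := (hu t ht).trans hRy
      rw [sqrt_sum_sq_eq_norm_toLp, norm_le_zero_iff] at h
      simpa using h
    rw [sum_eq_zero fun t ht => by simp [hu0 t ht, hM.le]]
    exact Real.sqrt_nonneg _
  set d : ℝ := (Fintype.card n : ℝ)
  set lam := M ^ 2 / Ry ^ 2
  have hlam : 0 < lam := by positivity
  have hstep : ∀ k ∈ Icc 1 K,
      min M |x k ⬝ᵥ u k| ^ 2 ≤ (M ^ 2 + β) * min 1 (ellipticalPotential lam x k) := by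
    intro k hk
    refine sq_min_abs_le_mul_min_one hM.le (by linarith) ?_
    have hlam_u : lam * (u k ⬝ᵥ u k) ≤ M ^ 2 := by
      grw [dotProduct_self_le_sq_of_sqrt_le (hu k hk)]
      exact (div_mul_cancel₀ _ (by positivity)).le
    calc (x k ⬝ᵥ u k) ^ 2
        ≤ ellipticalPotential lam x k * (lam * (u k ⬝ᵥ u k) + ∑ t ∈ Ico 1 k, (x t ⬝ᵥ u k) ^ 2) :=
          sq_dotProduct_le_ellipticalPotential_mul hlam k (u k)
      _ ≤ ellipticalPotential lam x k * (M ^ 2 + β) := by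
          gcongr
          · exact ellipticalPotential_nonneg hlam k
          · exact hpre k hk
      _ = (M ^ 2 + β) * ellipticalPotential lam x k := mul_comm _ _
  have hpot := sum_min_one_ellipticalPotential_le hlam fun k hk =>
    dotProduct_self_le_sq_of_sqrt_le (hx k hk)
  refine Real.le_sqrt_of_sq_le ?_
  calc (∑ t ∈ Icc 1 K, min M |x t ⬝ᵥ u t|) ^ 2
      ≤ K * ∑ t ∈ Icc 1 K, min M |x t ⬝ᵥ u t| ^ 2 := by
        simpa using sq_sum_le_card_mul_sum_sq (s := Icc 1 K)
    _ ≤ K * ∑ t ∈ Icc 1 K, (M ^ 2 + β) * min 1 (ellipticalPotential lam x t) := by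
        gcongr with t ht; exact hstep t ht
    _ = K * ((M ^ 2 + β) * ∑ t ∈ Icc 1 K, min 1 (ellipticalPotential lam x t)) := by
        rw [← mul_sum]
    _ ≤ K * ((M ^ 2 + β) * (2 * d * Real.log (1 + K * Rx ^ 2 / (d * lam)))) := by
        gcongr
    _ = _ := by
        simp only [lam, d]
        field_simp

end LinearEluder

theorem exists_dotProduct_eq_maxAbsSumInner' {R : Type*} [Fintype R] [Nonempty R] {d J : ℕ}
    (y : Fin J → R → Fin d → ℝ) (x : Fin d → ℝ) :
    ∃ u : Fin d → ℝ, x ⬝ᵥ u = maxAbsSumInner' y x ∧ (∀ v, |v ⬝ᵥ u| ≤ maxAbsSumInner' y v) ∧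
      ∃ r, √(∑ i, u i ^ 2) ≤ ∑ j, √(∑ i, y j r i ^ 2) := by
  obtain ⟨r, -, hr⟩ := exists_mem_eq_sup' univ_nonempty fun r => ∑ j, |x ⬝ᵥ y j r|
  set ε : Fin J → ℝ := fun j => if 0 ≤ x ⬝ᵥ y j r then 1 else -1
  have hε : ∀ j, |ε j| = 1 := fun j => by simp only [ε]; split_ifs <;> simp
  have hεx : ∀ j, ε j * (x ⬝ᵥ y j r) = |x ⬝ᵥ y j r| := fun j => by
    simp only [ε]; split_ifs with h
    · simp [abs_of_nonneg h]
    · simp [abs_of_neg (not_le.1 h)]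
  refine ⟨∑ j, ε j • y j r, ?_, fun v => ?_, r, ?_⟩
  · simp only [dotProduct_sum, dotProduct_smul, smul_eq_mul, hεx, maxAbsSumInner', hr]
  · calc |v ⬝ᵥ ∑ j, ε j • y j r| ≤ ∑ j, |ε j * (v ⬝ᵥ y j r)| := by
          simpa only [dotProduct_sum, dotProduct_smul, smul_eq_mul] using abs_sum_le_sum_abs _ _
      _ = ∑ j, |v ⬝ᵥ y j r| := by simp only [abs_mul, hε, one_mul]
      _ ≤ maxAbsSumInner' y v := le_sup' (fun r => ∑ j, |v ⬝ᵥ y j r|) (mem_univ r)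
  · simp only [sqrt_sum_sq_eq_norm_toLp, WithLp.toLp_sum, WithLp.toLp_smul]
    refine (norm_sum_le _ _).trans_eq (sum_congr rfl fun j _ => ?_)
    rw [norm_smul, Real.norm_eq_abs, hε, one_mul]

/-- Generalized ℓ₂-Eluder argument, single-index constant-β case:
if `‖x_k‖₂ ≤ R_x`, `max_{k,r} ∑_j ‖y_{k,j,r}‖₂ ≤ R_y`, and for every `k ∈ [K]`
`∑_{t<k} f_k(x_t)² ≤ β`, then for any `M > 0`,
`∑_{t=1}^K min{M, f_t(x_t)} ≤ √(2 d (M² K + β K) log(1 + (K/d) R_x² R_y² / M²))`. -/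
theorem generalized_l2_eluder
    {R : Type*} [Fintype R] [Nonempty R]
    (d K J : ℕ) (hd : 0 < d)
    (x : ℕ → Fin d → ℝ) (y : ℕ → Fin J → R → Fin d → ℝ)
    (Rx Ry β M : ℝ) (hβ : 0 ≤ β) (hM : 0 < M)
    (hx : ∀ k ∈ Finset.Icc 1 K, Real.sqrt (∑ i, (x k i) ^ 2) ≤ Rx)
    (hy : ∀ k ∈ Finset.Icc 1 K, ∀ r : R, ∑ j, Real.sqrt (∑ i, (y k j r i) ^ 2) ≤ Ry)
    (hpre : ∀ k ∈ Finset.Icc 1 K,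
      ∑ t ∈ Finset.Ico 1 k, (maxAbsSumInner' (y k) (x t)) ^ 2 ≤ β) :
    ∑ t ∈ Finset.Icc 1 K, min M (maxAbsSumInner' (y t) (x t))
      ≤ Real.sqrt (2 * d * (M ^ 2 * K + β * K) *
          Real.log (1 + ((K : ℝ) / d) * Rx ^ 2 * Ry ^ 2 / M ^ 2)) := by
  have : Nonempty (Fin d) := ⟨⟨0, hd⟩⟩
  choose u hxu hu r hu_norm using fun k => exists_dotProduct_eq_maxAbsSumInner' (y k) (x k)
  have hu_le : ∀ k ∈ Icc 1 K, √(∑ i, u k i ^ 2) ≤ Ry := fun k hk =>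
    (hu_norm k).trans (hy k hk (r k))
  have hpre_u : ∀ k ∈ Icc 1 K, ∑ t ∈ Ico 1 k, (x t ⬝ᵥ u k) ^ 2 ≤ β := fun k hk =>
    (sum_le_sum fun t _ => sq_le_sq.2 ((hu k (x t)).trans (le_abs_self _))).trans (hpre k hk)
  calc ∑ t ∈ Icc 1 K, min M (maxAbsSumInner' (y t) (x t))
      ≤ ∑ t ∈ Icc 1 K, min M |x t ⬝ᵥ u t| :=
        sum_le_sum fun t _ => min_le_min_left M (hxu t ▸ le_abs_self _)
    _ ≤ _ := by simpa using sum_min_abs_dotProduct_le hβ hM hx hu_le hpre_u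
end
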